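/- arXiv:1906.02775 — 6 statements merged into one kernel-verified Lean document; each statement's English description precedes it below -/
import Mathlib

section
/- In a linear Fisher market with unit supplies, if β and β' are budget-feasible utility-price vectors, then their elementwise maximum β⁺, defined by β⁺_i = max(β_i, β'_i) for each buyer i, is also a budget-feasible utility-price vector. -/
/-- In a linear Fisher market with unit supplies, a vector `β ∈ ℝ_{>0}^n` of utility
prices is *budget feasible* if there exist a feasible allocation `x` and prices `p`
such that `p j = max_i β i * v i j` for all `j`, `x i j > 0` implies
`β i * v i j = max_{i'} β i' * v i' j`, and `p · x i ≤ B i` for all `i`. -/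
def BudgetFeasible {n m : ℕ} (v : Fin n → Fin m → ℝ) (B : Fin n → ℝ)
    (β : Fin n → ℝ) : Prop :=
  (∀ i, 0 < β i) ∧
  ∃ (x : Fin n → Fin m → ℝ) (p : Fin m → ℝ),
    (∀ i j, 0 ≤ x i j) ∧
    (∀ j, ∑ i, x i j ≤ 1) ∧
    (∀ j, IsGreatest (Set.range fun i => β i * v i j) (p j)) ∧
    (∀ i j, 0 < x i j → β i * v i j = p j) ∧
    (∀ i, ∑ j, p j * x i j ≤ B i)

/-- **Elementwise max preserves budget feasibility.**  In a linear Fisher market with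
unit supplies, if `β` and `β'` are budget-feasible utility-price vectors, then their
elementwise maximum `β⁺ i = max (β i) (β' i)` is also budget feasible. -/
theorem elementwise_max_preserves_budget_feasibility {n m : ℕ}
    (v : Fin n → Fin m → ℝ) (B : Fin n → ℝ)
    (hv : ∀ i j, 0 < v i j) (hB : ∀ i, 0 < B i)
    (β β' : Fin n → ℝ)
    (hβ : BudgetFeasible v B β) (hβ' : BudgetFeasible v B β') :
    BudgetFeasible v B (fun i => max (β i) (β' i)) := by
  obtain ⟨hβpos, x, p, hx0, hxsum, hp, hxp, hbud⟩ := hβ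
  obtain ⟨hβ'pos, x', p', hx'0, hx'sum, hp', hxp', hbud'⟩ := hβ'
  -- prices are positive
  have hppos : ∀ j, 0 < p j := by
    intro j
    obtain ⟨i₁, hi₁⟩ := (hp j).1
    have := mul_pos (hβpos i₁) (hv i₁ j)
    simpa [hi₁] using hi₁ ▸ this
  have hp'pos : ∀ j, 0 < p' j := by
    intro j
    obtain ⟨i₁, hi₁⟩ := (hp' j).1
    have := mul_pos (hβ'pos i₁) (hv i₁ j)
    simpa [hi₁] using hi₁ ▸ this
  -- upper bound for the merged prices
  have hub : ∀ i j, max (β i) (β' i) * v i j ≤ max (p j) (p' j) := by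
    intro i j
    have h1 : β i * v i j ≤ p j := (hp j).2 ⟨i, rfl⟩
    have h2 : β' i * v i j ≤ p' j := (hp' j).2 ⟨i, rfl⟩
    rw [max_mul_of_nonneg _ _ (hv i j).le]
    exact max_le_max h1 h2
  refine ⟨fun i => lt_max_of_lt_left (hβpos i),
    fun i j => (1/2 : ℝ) * (if p' j ≤ p j then x i j else x' i j),
    fun j => max (p j) (p' j), ?_, ?_, ?_, ?_, ?_⟩
  · intro i j
    dsimp only
    have := hx0 i j; have := hx'0 i j
    split <;> nlinarith
  · intro j
    dsimp only
    rw [← Finset.mul_sum]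
    by_cases h : p' j ≤ p j
    · simp only [h, if_true]
      have := hxsum j; linarith
    · simp only [h, if_false]
      have := hx'sum j; linarith
  · intro j
    constructor
    · rcases le_total (p' j) (p j) with h | h
      · obtain ⟨i₀, hi₀⟩ := (hp j).1
        refine ⟨i₀, ?_⟩
        show max (β i₀) (β' i₀) * v i₀ j = max (p j) (p' j)
        have hge : max (β i₀) (β' i₀) * v i₀ j ≥ p j := by
          calc p j = β i₀ * v i₀ j := hi₀.symm
          _ ≤ max (β i₀) (β' i₀) * v i₀ j :=
            mul_le_mul_of_nonneg_right (le_max_left _ _) (hv i₀ j).le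
        have := hub i₀ j
        have hmax : max (p j) (p' j) = p j := max_eq_left h
        rw [hmax] at this ⊢
        linarith
      · obtain ⟨i₀, hi₀⟩ := (hp' j).1
        refine ⟨i₀, ?_⟩
        show max (β i₀) (β' i₀) * v i₀ j = max (p j) (p' j)
        have hge : max (β i₀) (β' i₀) * v i₀ j ≥ p' j := by
          calc p' j = β' i₀ * v i₀ j := hi₀.symm
          _ ≤ max (β i₀) (β' i₀) * v i₀ j :=
            mul_le_mul_of_nonneg_right (le_max_right _ _) (hv i₀ j).le
        have := hub i₀ j
        have hmax : max (p j) (p' j) = p' j := max_eq_right h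
        rw [hmax] at this ⊢
        linarith
    · rintro _ ⟨i, rfl⟩
      exact hub i j
  · intro i j hpos
    dsimp only at hpos ⊢
    split at hpos
    · next h =>
      have hx : 0 < x i j := by nlinarith
      have heq : β i * v i j = p j := hxp i j hx
      have hge : p j ≤ max (β i) (β' i) * v i j := by
        rw [← heq]
        exact mul_le_mul_of_nonneg_right (le_max_left _ _) (hv i j).le
      have := hub i j
      have hmax : max (p j) (p' j) = p j := max_eq_left h
      rw [hmax] at this ⊢
      linarith
    · next h =>
      have hx : 0 < x' i j := by nlinarith
      have heq : β' i * v i j = p' j := hxp' i j hx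
      have hge : p' j ≤ max (β i) (β' i) * v i j := by
        rw [← heq]
        exact mul_le_mul_of_nonneg_right (le_max_right _ _) (hv i j).le
      have := hub i j
      have hmax : max (p j) (p' j) = p' j := max_eq_right (le_of_not_ge h)
      rw [hmax] at this ⊢
      linarith
  · intro i
    have key : ∀ j, max (p j) (p' j) * ((1/2 : ℝ) * (if p' j ≤ p j then x i j else x' i j))
        ≤ (1/2 : ℝ) * (p j * x i j + p' j * x' i j) := by
      intro j
      have h1 : 0 ≤ p' j * x' i j := mul_nonneg (hp'pos j).le (hx'0 i j)
      have h2 : 0 ≤ p j * x i j := mul_nonneg (hppos j).le (hx0 i j)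
      by_cases h : p' j ≤ p j
      · simp only [h, if_true, max_eq_left h]
        linarith
      · simp only [h, if_false, max_eq_right (le_of_not_ge h)]
        linarith
    calc ∑ j, max (p j) (p' j) * ((1/2 : ℝ) * (if p' j ≤ p j then x i j else x' i j))
        ≤ ∑ j, (1/2 : ℝ) * (p j * x i j + p' j * x' i j) :=
          Finset.sum_le_sum fun j _ => key j
      _ = (1/2 : ℝ) * (∑ j, p j * x i j + ∑ j, p' j * x' i j) := by
          rw [← Finset.mul_sum, Finset.sum_add_distrib]
      _ ≤ (1/2 : ℝ) * (B i + B i) := by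
          have := hbud i; have := hbud' i; nlinarith
      _ ≤ B i := by linarith [hB i]
end

section
/- In a linear Fisher market with unit supplies, let x* be a CEEI allocation (a maximizer of the Eisenberg–Gale program) and let β*_i = B_i / (v_i · x*_i) be its utility prices. Then β ≤ β* componentwise for every utility-price vector β that is budget feasible with a market-clearing allocation; consequently the CEEI solution corresponds to the unique maximal budget-feasible utility-price vector. -/
/-- Extended-real-valued logarithm: `elog t = log t` for `t > 0` and `⊥` (i.e. `-∞`)
for `t ≤ 0`. -/
noncomputable def elog (t : ℝ) : EReal :=
  if t ≤ 0 then ⊥ else ((Real.log t : ℝ) : EReal)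

/-- An allocation is feasible if it is nonnegative and allocates at most the supply
`s j` of each item `j`. -/
def Feasible {ι : Type*} [Fintype ι] {m : ℕ} (s : Fin m → ℝ)
    (x : ι → Fin m → ℝ) : Prop :=
  (∀ i j, 0 ≤ x i j) ∧ ∀ j, ∑ i, x i j ≤ s j

/-- The Eisenberg–Gale objective `∑ i, B i * log (v i · x i)` (valued in `EReal`). -/
noncomputable def EGobj {ι : Type*} [Fintype ι] {m : ℕ} (v : ι → Fin m → ℝ)
    (B : ι → ℝ) (x : ι → Fin m → ℝ) : EReal :=
  ∑ i, (B i : EReal) * elog (∑ j, v i j * x i j)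

/-- `x` is a maximizer of the Eisenberg–Gale program (a CEEI allocation). -/
def EGMax {ι : Type*} [Fintype ι] {m : ℕ} (s : Fin m → ℝ) (v : ι → Fin m → ℝ)
    (B : ι → ℝ) (x : ι → Fin m → ℝ) : Prop :=
  Feasible s x ∧ ∀ y, Feasible s y → EGobj v B y ≤ EGobj v B x

/-- In a linear Fisher market with unit supplies, a vector `β ∈ ℝ_{>0}^n` of utility
prices is *budget feasible with market clearing* if there exist a market-clearing
allocation `x` and prices `p` such that `p j = max_i β i * v i j` for all `j`,
`x i j > 0` implies `β i * v i j = max_{i'} β i' * v i' j`, and `p · x i ≤ B i`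
for all `i`. -/
def BudgetFeasibleClearing {n m : ℕ} (v : Fin n → Fin m → ℝ) (B : Fin n → ℝ)
    (β : Fin n → ℝ) : Prop :=
  (∀ i, 0 < β i) ∧
  ∃ (x : Fin n → Fin m → ℝ) (p : Fin m → ℝ),
    (∀ i j, 0 ≤ x i j) ∧
    (∀ j, ∑ i, x i j = 1) ∧
    (∀ j, IsGreatest (Set.range fun i => β i * v i j) (p j)) ∧
    (∀ i j, 0 < x i j → β i * v i j = p j) ∧
    (∀ i, ∑ j, p j * x i j ≤ B i)

open Filter Topology

lemma ereal_coe_sum {ι : Type*} [Fintype ι] (f : ι → ℝ) :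
    ((∑ i, f i : ℝ) : EReal) = ∑ i, (f i : EReal) :=
  map_sum (⟨⟨(fun x => (x : EReal)), EReal.coe_zero⟩, EReal.coe_add⟩ : ℝ →+ EReal) f Finset.univ

lemma EGobj_eq {ι : Type*} [Fintype ι] {m : ℕ} (v : ι → Fin m → ℝ) (B : ι → ℝ)
    (x : ι → Fin m → ℝ) (hu : ∀ i, 0 < ∑ j, v i j * x i j) :
    EGobj v B x = ((∑ i, B i * Real.log (∑ j, v i j * x i j) : ℝ) : EReal) := by
  rw [EGobj, ereal_coe_sum]
  refine Finset.sum_congr rfl fun i _ => ?_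
  rw [elog, if_neg (not_le.2 (hu i)), ← EReal.coe_mul]

lemma ereal_sum_eq_bot {ι : Type*} [Fintype ι] (f : ι → EReal) (i : ι) (h : f i = ⊥) :
    ∑ k, f k = ⊥ := by
  classical
  rw [← Finset.add_sum_erase _ f (Finset.mem_univ i), h, EReal.bot_add]

lemma EGMax_util_pos {n m : ℕ} (hn : 0 < n) (hm : 0 < m) (v : Fin n → Fin m → ℝ)
    (B : Fin n → ℝ) (hv : ∀ i j, 0 < v i j) (hB : ∀ i, 0 < B i)
    (xs : Fin n → Fin m → ℝ) (hxs : EGMax (fun _ => (1:ℝ)) v B xs) :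
    ∀ i, 0 < ∑ j, v i j * xs i j := by
  by_contra hcon
  push_neg at hcon
  obtain ⟨i, hi⟩ := hcon
  have hbot : EGobj v B xs = ⊥ := by
    refine ereal_sum_eq_bot _ i ?_
    rw [elog, if_pos hi, EReal.coe_mul_bot_of_pos (hB i)]
  set y : Fin n → Fin m → ℝ := fun _ _ => 1 / n with hy
  have hyfeas : Feasible (fun _ => (1:ℝ)) y := by
    constructor
    · intro i j; positivity
    · intro j
      simp only [hy, Finset.sum_const, Finset.card_univ, Fintype.card_fin, nsmul_eq_mul]
      rw [mul_one_div, div_self (by exact_mod_cast hn.ne')]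
  have hyu : ∀ k, 0 < ∑ j, v k j * y k j := by
    intro k
    have : Nonempty (Fin m) := ⟨⟨0, hm⟩⟩
    have hn' : (0:ℝ) < n := by exact_mod_cast hn
    exact Finset.sum_pos
      (fun j _ => mul_pos (hv k j) (by simp only [hy]; exact div_pos one_pos hn'))
      Finset.univ_nonempty
  have hle := hxs.2 y hyfeas
  rw [EGobj_eq v B y hyu, hbot, le_bot_iff] at hle
  exact EReal.coe_ne_bot _ hle

lemma EGMax_real_le {n m : ℕ} (v : Fin n → Fin m → ℝ) (B : Fin n → ℝ)
    (xs : Fin n → Fin m → ℝ) (hxs : EGMax (fun _ => (1:ℝ)) v B xs)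
    (hu : ∀ i, 0 < ∑ j, v i j * xs i j)
    (y : Fin n → Fin m → ℝ) (hyf : Feasible (fun _ => (1:ℝ)) y)
    (hyu : ∀ i, 0 < ∑ j, v i j * y i j) :
    ∑ i, B i * Real.log (∑ j, v i j * y i j) ≤
      ∑ i, B i * Real.log (∑ j, v i j * xs i j) := by
  have hle := hxs.2 y hyf
  rw [EGobj_eq v B y hyu, EGobj_eq v B xs hu] at hle
  exact EReal.coe_le_coe_iff.1 hle

lemma EGMax_clearing {n m : ℕ} (hn : 0 < n) (hm : 0 < m) (v : Fin n → Fin m → ℝ)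
    (B : Fin n → ℝ) (hv : ∀ i j, 0 < v i j) (hB : ∀ i, 0 < B i)
    (xs : Fin n → Fin m → ℝ) (hxs : EGMax (fun _ => (1:ℝ)) v B xs) :
    ∀ j, ∑ i, xs i j = 1 := by
  have hu := EGMax_util_pos hn hm v B hv hB xs hxs
  intro j
  by_contra hne
  have hlt : ∑ i, xs i j < 1 := lt_of_le_of_ne (hxs.1.2 j) hne
  set i0 : Fin n := ⟨0, hn⟩
  set δ : ℝ := 1 - ∑ i, xs i j with hδ
  have hδpos : 0 < δ := by simp [hδ]; linarith
  set y : Fin n → Fin m → ℝ :=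
    fun k j' => xs k j' + (if k = i0 ∧ j' = j then δ else 0) with hydef
  have hyu : ∀ k, ∑ j', v k j' * y k j' =
      (∑ j', v k j' * xs k j') + (if k = i0 then v k j * δ else 0) := by
    intro k
    simp only [hydef, mul_add, Finset.sum_add_distrib]
    congr 1
    by_cases hk : k = i0
    · simp [hk, mul_ite, Finset.sum_ite_eq']
    · simp [hk]
  have hyfeas : Feasible (fun _ => (1:ℝ)) y := by
    constructor
    · intro k j'
      have := hxs.1.1 k j'
      simp only [hydef]
      have h0 : (0:ℝ) ≤ (if k = i0 ∧ j' = j then δ else 0) := by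
        split_ifs
        · exact le_of_lt hδpos
        · exact le_rfl
      have h1 := hxs.1.1 k j'
      linarith
    · intro j'
      simp only [hydef, Finset.sum_add_distrib]
      by_cases hj : j' = j
      · subst hj
        have h1 : ∑ i, (if i = i0 ∧ True then δ else 0) = δ := by simp
        simp only [Finset.sum_ite_eq', and_true, Finset.mem_univ, if_true]
        linarith
      · simp [hj, hxs.1.2 j']
  have hyu2 : ∀ k, 0 < ∑ j', v k j' * y k j' := by
    intro k
    rw [hyu k]
    have h0 : (0:ℝ) ≤ (if k = i0 then v k j * δ else 0) := by
      split_ifs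
      · exact le_of_lt (mul_pos (hv k j) hδpos)
      · exact le_rfl
    linarith [hu k]
  have hstrict : ∑ i, B i * Real.log (∑ j', v i j' * xs i j') <
      ∑ i, B i * Real.log (∑ j', v i j' * y i j') := by
    refine Finset.sum_lt_sum (fun k _ => ?_) ⟨i0, Finset.mem_univ i0, ?_⟩
    · rw [hyu k]
      have h0 : (0:ℝ) ≤ (if k = i0 then v k j * δ else 0) := by
        split_ifs
        · exact le_of_lt (mul_pos (hv k j) hδpos)
        · exact le_rfl
      have hlog := Real.log_le_log (hu k) (le_add_of_nonneg_right h0)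
      nlinarith [hB k]
    · rw [hyu i0, if_pos rfl]
      have hlog := Real.log_lt_log (hu i0)
        (show (∑ j', v i0 j' * xs i0 j') < (∑ j', v i0 j' * xs i0 j') + v i0 j * δ by
          nlinarith [hv i0 j])
      nlinarith [hB i0]
  linarith [EGMax_real_le v B xs hxs hu y hyfeas hyu2]


lemma deriv_pos_exists {f : ℝ → ℝ} {f' : ℝ} (h : HasDerivAt f f' 0) (hp : 0 < f')
    (c : ℝ) (hc : 0 < c) : ∃ t, 0 < t ∧ t < c ∧ f 0 < f t := by
  have hs := hasDerivAt_iff_tendsto_slope.1 h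
  have h1 : ∀ᶠ t in 𝓝[≠] (0:ℝ), 0 < slope f 0 t := hs.eventually (eventually_gt_nhds hp)
  have h2 : ∀ᶠ t in 𝓝[>] (0:ℝ), 0 < slope f 0 t :=
    h1.filter_mono (nhdsWithin_mono _ (fun x hx => ne_of_gt hx))
  have h3 : ∀ᶠ t in 𝓝[>] (0:ℝ), t < c :=
    eventually_nhdsWithin_of_eventually_nhds (eventually_lt_nhds hc)
  obtain ⟨t, ht, ht1, htpos⟩ := (h2.and (h3.and self_mem_nhdsWithin)).exists
  refine ⟨t, htpos, ht1, ?_⟩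
  have hsl : slope f 0 t = (f t - f 0) / t := by rw [slope_def_field]; ring
  rw [hsl] at ht
  rcases div_pos_iff.1 ht with ⟨h1', _⟩ | ⟨_, h2'⟩ <;> linarith

lemma EGMax_mbb {n m : ℕ} (hn : 0 < n) (hm : 0 < m) (v : Fin n → Fin m → ℝ)
    (B : Fin n → ℝ) (hv : ∀ i j, 0 < v i j) (hB : ∀ i, 0 < B i)
    (xs : Fin n → Fin m → ℝ) (hxs : EGMax (fun _ => (1:ℝ)) v B xs) :
    ∀ i k j, 0 < xs i j →
      (B k / ∑ j', v k j' * xs k j') * v k j ≤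
        (B i / ∑ j', v i j' * xs i j') * v i j := by
  have hu := EGMax_util_pos hn hm v B hv hB xs hxs
  intro i k j hxij
  by_contra hlt
  push_neg at hlt
  have hik : i ≠ k := by rintro rfl; exact lt_irrefl _ hlt
  set a := ∑ j', v i j' * xs i j' with ha
  set b := ∑ j', v k j' * xs k j' with hb
  set f : ℝ → ℝ :=
    fun t => B i * Real.log (a - v i j * t) + B k * Real.log (b + v k j * t) with hf
  have hd1 : HasDerivAt (fun t : ℝ => B i * Real.log (a - v i j * t))
      (B i * (-(v i j) / a)) 0 := by
    have hd : HasDerivAt (fun t : ℝ => a - v i j * t) (-(v i j)) 0 := by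
      simpa using ((hasDerivAt_id (0:ℝ)).const_mul (v i j)).const_sub a
    have := (hd.log (by simpa using (hu i).ne')).const_mul (B i)
    simpa using this
  have hd2 : HasDerivAt (fun t : ℝ => B k * Real.log (b + v k j * t))
      (B k * (v k j / b)) 0 := by
    have hd : HasDerivAt (fun t : ℝ => b + v k j * t) (v k j) 0 := by
      simpa using ((hasDerivAt_id (0:ℝ)).const_mul (v k j)).const_add b
    have := (hd.log (by simpa using (hu k).ne')).const_mul (B k)
    simpa using this
  have hder : HasDerivAt f (B i * (-(v i j) / a) + B k * (v k j / b)) 0 := hd1.add hd2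
  have hdpos : 0 < B i * (-(v i j) / a) + B k * (v k j / b) := by
    have e1 : B i * (-(v i j) / a) = -((B i / a) * v i j) := by ring
    have e2 : B k * (v k j / b) = (B k / b) * v k j := by ring
    rw [e1, e2]; linarith
  obtain ⟨t, htpos, htlt, hft⟩ := deriv_pos_exists hder hdpos (xs i j) hxij
  set y : Fin n → Fin m → ℝ := fun l j' =>
    xs l j' + (if l = k ∧ j' = j then t else 0) - (if l = i ∧ j' = j then t else 0) with hy
  have hyu : ∀ l, ∑ j', v l j' * y l j' =
      (∑ j', v l j' * xs l j') + (if l = k then v l j * t else 0)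
        - (if l = i then v l j * t else 0) := by
    intro l
    simp only [hy, mul_sub, mul_add, Finset.sum_sub_distrib, Finset.sum_add_distrib]
    congr 1
    · congr 1
      by_cases hl : l = k <;> simp [hl, mul_ite, Finset.sum_ite_eq']
    · by_cases hl : l = i <;> simp [hl, mul_ite, Finset.sum_ite_eq']
  have hyfeas : Feasible (fun _ => (1:ℝ)) y := by
    constructor
    · intro l j'
      simp only [hy]
      by_cases h2 : l = i ∧ j' = j
      · obtain ⟨rfl, rfl⟩ := h2
        rw [if_neg (by rintro ⟨rfl, -⟩; exact hik rfl), if_pos ⟨rfl, rfl⟩]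
        linarith
      · rw [if_neg h2]
        have h0 : (0:ℝ) ≤ (if l = k ∧ j' = j then t else 0) := by
          split_ifs; exacts [le_of_lt htpos, le_rfl]
        have h1 := hxs.1.1 l j'
        linarith
    · intro j'
      simp only [hy, Finset.sum_sub_distrib, Finset.sum_add_distrib]
      by_cases hj : j' = j
      · have e1 : ∑ l, (if l = k ∧ j' = j then t else 0) = t := by simp [hj]
        have e2 : ∑ l, (if l = i ∧ j' = j then t else 0) = t := by simp [hj]
        rw [e1, e2]
        have h1 : ∑ l, xs l j' ≤ 1 := by simpa using hxs.1.2 j'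
        linarith
      · have e1 : ∑ l, (if l = k ∧ j' = j then t else 0) = 0 := by
          simp [hj]
        have e2 : ∑ l, (if l = i ∧ j' = j then t else 0) = 0 := by
          simp [hj]
        rw [e1, e2]
        have := hxs.1.2 j'
        simpa using this
  have hvxt : v i j * t < v i j * xs i j := mul_lt_mul_of_pos_left htlt (hv i j)
  have hsingle : v i j * xs i j ≤ a := by
    rw [ha]
    exact Finset.single_le_sum
      (fun j' _ => mul_nonneg (hv i j').le (hxs.1.1 i j')) (Finset.mem_univ j)
  have hyu2 : ∀ l, 0 < ∑ j', v l j' * y l j' := by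
    intro l
    rw [hyu l]
    by_cases hli : l = i
    · subst hli
      rw [if_neg hik, if_pos rfl]
      linarith [hu l]
    · rw [if_neg hli]
      by_cases hlk : l = k
      · subst hlk
        rw [if_pos rfl]
        have : 0 < v l j * t := mul_pos (hv l j) htpos
        linarith [hu l]
      · rw [if_neg hlk]
        have := hu l
        linarith
  have hsum : ∑ l, B l * Real.log (∑ j', v l j' * y l j')
      - ∑ l, B l * Real.log (∑ j', v l j' * xs l j') = f t - f 0 := by
    rw [← Finset.sum_sub_distrib]
    have hvan : ∀ l, l ∉ ({i, k} : Finset (Fin n)) →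
        B l * Real.log (∑ j', v l j' * y l j')
          - B l * Real.log (∑ j', v l j' * xs l j') = 0 := by
      intro l hl
      simp only [Finset.mem_insert, Finset.mem_singleton, not_or] at hl
      rw [hyu l, if_neg hl.2, if_neg hl.1]
      ring_nf
    rw [← Finset.sum_subset (Finset.subset_univ ({i, k} : Finset (Fin n)))
      (fun l _ hl => hvan l hl), Finset.sum_pair hik]
    rw [hyu i, hyu k, if_neg hik, if_pos rfl, if_pos rfl, if_neg (Ne.symm hik)]
    rw [← ha, ← hb]
    simp only [hf, mul_zero, sub_zero, add_zero]
    ring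
  have hle := EGMax_real_le v B xs hxs hu y hyfeas hyu2
  have hf0 : f 0 = B i * Real.log a + B k * Real.log b := by simp [hf]
  rw [hf0] at hft
  have hft' : f t - f 0 > 0 := by rw [hf0]; linarith
  linarith [hsum, hle, hft']

/-- **CEEI corresponds to the unique maximal budget-feasible utility prices.**
In a linear Fisher market with unit supplies, let `xs` be a CEEI allocation (a
maximizer of the Eisenberg–Gale program) and let `β* i = B i / (v i · xs i)` be its
utility prices.  Then `β*` is itself budget feasible with market clearing, and
`β ≤ β*` componentwise for every utility-price vector `β` that is budget feasible
with a market-clearing allocation; consequently the CEEI solution corresponds to the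
unique maximal budget-feasible utility-price vector. -/
theorem ceei_is_maximal_utility_prices {n m : ℕ} (hn : 0 < n) (hm : 0 < m)
    (v : Fin n → Fin m → ℝ) (B : Fin n → ℝ)
    (hv : ∀ i j, 0 < v i j) (hB : ∀ i, 0 < B i)
    (xs : Fin n → Fin m → ℝ) (hxs : EGMax (fun _ => (1 : ℝ)) v B xs) :
    BudgetFeasibleClearing v B (fun i => B i / (∑ j, v i j * xs i j)) ∧
    ∀ β : Fin n → ℝ, BudgetFeasibleClearing v B β →
      ∀ i, β i ≤ B i / (∑ j, v i j * xs i j) := by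
  have hu := EGMax_util_pos hn hm v B hv hB xs hxs
  have hclear := EGMax_clearing hn hm v B hv hB xs hxs
  have hmbb := EGMax_mbb hn hm v B hv hB xs hxs
  have hne : (Finset.univ : Finset (Fin n)).Nonempty := ⟨⟨0, hn⟩, Finset.mem_univ _⟩
  set βs : Fin n → ℝ := fun i => B i / (∑ j, v i j * xs i j) with hβs
  have hβpos : ∀ i, 0 < βs i := fun i => div_pos (hB i) (hu i)
  set ps : Fin m → ℝ := fun j => Finset.univ.sup' hne (fun i => βs i * v i j) with hps
  have hpsle : ∀ i j, βs i * v i j ≤ ps j := fun i j =>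
    Finset.le_sup' (fun i => βs i * v i j) (Finset.mem_univ i)
  have hgr : ∀ j, IsGreatest (Set.range fun i => βs i * v i j) (ps j) := by
    intro j
    constructor
    · obtain ⟨i, _, hi⟩ := Finset.exists_mem_eq_sup' hne (fun i => βs i * v i j)
      exact ⟨i, hi.symm⟩
    · rintro z ⟨i, rfl⟩
      exact hpsle i j
  have hcomp : ∀ i j, 0 < xs i j → βs i * v i j = ps j := by
    intro i j hx
    refine le_antisymm (hpsle i j) ?_
    exact Finset.sup'_le _ _ (fun k _ => hmbb i k j hx)
  have hbudget : ∀ i, ∑ j, ps j * xs i j = B i := by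
    intro i
    have h1 : ∀ j, ps j * xs i j = βs i * (v i j * xs i j) := by
      intro j
      rcases eq_or_lt_of_le (hxs.1.1 i j) with h | h
      · rw [← h]; ring
      · rw [← hcomp i j h]; ring
    rw [Finset.sum_congr rfl (fun j _ => h1 j), ← Finset.mul_sum]
    simp only [hβs]
    rw [div_mul_cancel₀ _ (hu i).ne']
  refine ⟨⟨hβpos, xs, ps, hxs.1.1, hclear, hgr, hcomp,
    fun i => le_of_eq (hbudget i)⟩, ?_⟩
  rintro β ⟨hβp, x, p, hxnn, hxcl, hpgr, hpcomp, hbud⟩ i1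
  by_contra hcon0
  push_neg at hcon0
  have hcon : βs i1 < β i1 := hcon0
  set r : Fin n → ℝ := fun i => β i / βs i with hr
  set c : ℝ := Finset.univ.sup' hne r with hc
  have hrc : ∀ i, r i ≤ c := fun i => Finset.le_sup' r (Finset.mem_univ i)
  have hc1 : 1 < c := by
    have h1 : 1 < r i1 := by
      rw [hr]
      exact (one_lt_div (hβpos i1)).2 hcon
    exact lt_of_lt_of_le h1 (hrc i1)
  set S : Finset (Fin n) := Finset.univ.filter (fun i => c ≤ r i) with hS
  have hSmem : ∀ i, i ∈ S ↔ c ≤ r i := by intro i; simp [hS]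
  have hSne : S.Nonempty := by
    obtain ⟨istar, _, histar⟩ := Finset.exists_mem_eq_sup' hne r
    exact ⟨istar, (hSmem _).2 (le_of_eq histar)⟩
  have hβc : ∀ i ∈ S, β i = c * βs i := by
    intro i hi
    have h3 : r i = c := le_antisymm (hrc i) ((hSmem i).1 hi)
    rw [hr] at h3
    simp only at h3
    rw [div_eq_iff (hβpos i).ne'] at h3
    exact h3
  set J : Finset (Fin m) := Finset.univ.filter (fun j => ∃ i ∈ S, 0 < xs i j) with hJ
  have hJmem : ∀ j, j ∈ J ↔ ∃ i ∈ S, 0 < xs i j := by intro j; simp [hJ]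
  have hple : ∀ i j, β i * v i j ≤ p j := fun i j => (hpgr j).2 ⟨i, rfl⟩
  have hpspos : ∀ j, 0 < ps j :=
    fun j => lt_of_lt_of_le (mul_pos (hβpos ⟨0, hn⟩) (hv _ j)) (hpsle _ j)
  have hppos : ∀ j, 0 < p j :=
    fun j => lt_of_lt_of_le (mul_pos (hβp ⟨0, hn⟩) (hv _ j)) (hple _ j)
  have hF1 : ∀ j ∈ J, c * ps j ≤ p j := by
    intro j hj
    obtain ⟨i, hiS, hix⟩ := (hJmem j).1 hj
    have h1 : ps j = βs i * v i j := (hcomp i j hix).symm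
    calc c * ps j = β i * v i j := by rw [h1, hβc i hiS]; ring
    _ ≤ p j := hple i j
  have hF2 : ∀ j ∈ J, ∀ k, 0 < x k j → k ∈ S := by
    intro j hj k hk
    have h1 : β k * v k j = p j := hpcomp k j hk
    have h2 : c * (βs k * v k j) ≤ β k * v k j := by
      calc c * (βs k * v k j) ≤ c * ps j :=
        mul_le_mul_of_nonneg_left (hpsle k j) (le_of_lt (lt_trans one_pos hc1))
      _ ≤ p j := hF1 j hj
      _ = β k * v k j := h1.symm
    have h3 : c * βs k ≤ β k :=
      le_of_mul_le_mul_right (by rw [mul_assoc]; exact h2) (hv k j)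
    refine (hSmem k).2 ?_
    rw [hr]
    simp only
    rw [le_div_iff₀ (hβpos k)]
    exact h3
  have hxzero : ∀ i ∈ S, ∀ j, j ∉ J → xs i j = 0 := by
    intro i hi j hj
    by_contra h
    exact hj ((hJmem j).2 ⟨i, hi, lt_of_le_of_ne (hxs.1.1 i j) (Ne.symm h)⟩)
  have hF3 : ∑ i ∈ S, B i ≤ ∑ j ∈ J, ps j := by
    have h1 : ∀ i ∈ S, B i = ∑ j ∈ J, ps j * xs i j := by
      intro i hi
      rw [← hbudget i]
      exact (Finset.sum_subset (Finset.subset_univ J)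
        (fun j _ hj => by rw [hxzero i hi j hj, mul_zero])).symm
    rw [Finset.sum_congr rfl h1, Finset.sum_comm]
    apply Finset.sum_le_sum
    intro j _
    rw [← Finset.mul_sum]
    have h2 : ∑ i ∈ S, xs i j ≤ 1 := by
      rw [← hclear j]
      exact Finset.sum_le_sum_of_subset_of_nonneg (Finset.subset_univ S)
        (fun i _ _ => hxs.1.1 i j)
    nlinarith [hpspos j]
  have hF4 : ∑ j ∈ J, p j ≤ ∑ i ∈ S, B i := by
    have h1 : ∀ j ∈ J, p j = ∑ i ∈ S, p j * x i j := by
      intro j hj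
      have h2 : ∑ i ∈ S, p j * x i j = ∑ i, p j * x i j := by
        apply Finset.sum_subset (Finset.subset_univ S)
        intro i _ hiS
        have h3 : x i j = 0 := by
          by_contra h
          exact hiS (hF2 j hj i (lt_of_le_of_ne (hxnn i j) (Ne.symm h)))
        rw [h3, mul_zero]
      rw [h2, ← Finset.mul_sum, hxcl j, mul_one]
    rw [Finset.sum_congr rfl h1, Finset.sum_comm]
    apply Finset.sum_le_sum
    intro i _
    refine le_trans ?_ (hbud i)
    exact Finset.sum_le_sum_of_subset_of_nonneg (Finset.subset_univ J)
      (fun j _ _ => mul_nonneg (hppos j).le (hxnn i j))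
  have hJne : J.Nonempty := by
    obtain ⟨i0, hi0⟩ := hSne
    have h1 := hu i0
    have h2 : ∃ j, 0 < xs i0 j := by
      by_contra h
      push_neg at h
      rw [Finset.sum_eq_zero (fun j _ => by
        rw [le_antisymm (h j) (hxs.1.1 i0 j), mul_zero])] at h1
      exact lt_irrefl _ h1
    obtain ⟨j, hj⟩ := h2
    exact ⟨j, (hJmem j).2 ⟨i0, hi0, hj⟩⟩
  have hF6 : 0 < ∑ j ∈ J, ps j := Finset.sum_pos (fun j _ => hpspos j) hJne
  have hchain : c * ∑ j ∈ J, ps j ≤ ∑ j ∈ J, ps j := by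
    calc c * ∑ j ∈ J, ps j = ∑ j ∈ J, c * ps j := by rw [Finset.mul_sum]
    _ ≤ ∑ j ∈ J, p j := Finset.sum_le_sum hF1
    _ ≤ ∑ i ∈ S, B i := hF4
    _ ≤ ∑ j ∈ J, ps j := hF3
  nlinarith [hF6, hc1, hchain]
end

section
/- In a linear Fisher market, let x* be a maximizer of the Eisenberg–Gale program and define β_i = B_i / (v_i · x*_i) and p_j = max_i β_i v_{ij}. Then: (a) x*_{ij} > 0 implies β_i v_{ij} = p_j (each buyer has a single utility price, i.e., equal bang-per-buck across all items assigned to them); (b) p · x*_i = B_i for every buyer i, so that ∑_j s_j p_j = ∑_i B_i; (c) the market clears: ∑_i x*_{ij} = s_j for every item j; (d) for every y ∈ ℝ_{≥0}^m with p · y ≤ B_i one has v_i · y ≤ v_i · x*_i, i.e., the CEEI allocation is a market equilibrium and has no regret. -/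
open Finset Filter Topology

theorem EReal.coe_finsetSum {ι : Type*} (s : Finset ι) (f : ι → ℝ) :
    ((∑ i ∈ s, f i : ℝ) : EReal) = ∑ i ∈ s, (f i : EReal) :=
  map_sum (⟨⟨(↑), EReal.coe_zero⟩, EReal.coe_add⟩ : ℝ →+ EReal) f s

/-- First-order optimality of a weighted log-sum at `a` along the segment towards `b`:
the directional derivative `∑ i, B i * (b i - a i) / a i` is nonpositive. -/
theorem sum_div_mul_le_of_forall_log_le {ι : Type*} [Fintype ι] {B a b : ι → ℝ}
    (hB : ∀ i, 0 ≤ B i) (ha : ∀ i, 0 < a i) (hb : ∀ i, 0 ≤ b i)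
    (hmax : ∀ t ∈ Set.Ioo (0 : ℝ) 1,
      ∑ i, B i * Real.log ((1 - t) * a i + t * b i) ≤ ∑ i, B i * Real.log (a i)) :
    ∑ i, B i / a i * b i ≤ ∑ i, B i := by
  set g : ℝ → ℝ := fun t => ∑ i, B i * (b i - a i) / ((1 - t) * a i + t * b i)
  have hg_nonpos : ∀ t ∈ Set.Ioo (0 : ℝ) 1, g t ≤ 0 := by
    intro t ht
    have hw : ∀ i, 0 < (1 - t) * a i + t * b i := fun i => by
      have := ha i; have := hb i; nlinarith [ht.1, ht.2]
    -- `log w - log a ≥ 1 - a / w = t (b - a) / w`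
    have hlog : ∀ i, t * (B i * (b i - a i) / ((1 - t) * a i + t * b i))
        ≤ B i * Real.log ((1 - t) * a i + t * b i) - B i * Real.log (a i) := fun i => by
      have h := Real.one_sub_inv_le_log_of_pos (div_pos (hw i) (ha i))
      rw [Real.log_div (hw i).ne' (ha i).ne', inv_div] at h
      have e : t * (B i * (b i - a i) / ((1 - t) * a i + t * b i))
          = B i * (1 - a i / ((1 - t) * a i + t * b i)) := by
        rw [one_sub_div (hw i).ne']
        ring
      rw [e, ← mul_sub]
      exact mul_le_mul_of_nonneg_left h (hB i)
    have : t * g t ≤ 0 := by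
      rw [mul_sum]
      linarith [sum_le_sum fun i (_ : i ∈ univ) => hlog i, sum_sub_distrib (s := univ)
        (fun i => B i * Real.log ((1 - t) * a i + t * b i)) (fun i => B i * Real.log (a i)),
        hmax t ht]
    exact nonpos_of_mul_nonpos_right this ht.1
  have hg_cont : ContinuousAt g 0 := by
    fun_prop (disch := simp [(ha _).ne'])
  have hg0 : g 0 ≤ 0 :=
    le_of_tendsto (hg_cont.tendsto.mono_left nhdsWithin_le_nhds)
      (eventually_of_mem (Ioo_mem_nhdsGT one_pos) hg_nonpos)
  have e : g 0 = ∑ i, B i / a i * b i - ∑ i, B i := by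
    simp only [g, ← sum_sub_distrib]
    refine sum_congr rfl fun i _ => ?_
    field_simp [(ha i).ne']
    ring
  linarith

theorem complementary_slackness {ι κ : Type*} [Fintype ι] [Fintype κ] {β : ι → ℝ}
    {w x : ι → κ → ℝ} {p s : κ → ℝ} (hwp : ∀ i j, β i * w i j ≤ p j) (hp : ∀ j, 0 ≤ p j)
    (hx : ∀ i j, 0 ≤ x i j) (hxs : ∀ j, ∑ i, x i j ≤ s j)
    (hval : ∑ j, s j * p j ≤ ∑ i, β i * ∑ j, w i j * x i j) :
    (∀ i j, β i * w i j * x i j = p j * x i j) ∧ ∀ j, p j * ∑ i, x i j = p j * s j := by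
  have hwx : ∀ i j, β i * w i j * x i j ≤ p j * x i j := fun i j =>
    mul_le_mul_of_nonneg_right (hwp i j) (hx i j)
  have hxs' : ∀ j, p j * ∑ i, x i j ≤ p j * s j := fun j =>
    mul_le_mul_of_nonneg_left (hxs j) (hp j)
  have hle₁ : ∑ i, ∑ j, β i * w i j * x i j ≤ ∑ i, ∑ j, p j * x i j :=
    sum_le_sum fun i _ => sum_le_sum fun j _ => hwx i j
  have hle₂ : ∑ i, ∑ j, p j * x i j ≤ ∑ j, p j * s j := by
    rw [sum_comm]
    simpa only [mul_sum] using sum_le_sum fun j (_ : j ∈ univ) => hxs' j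
  have hval' : ∑ j, p j * s j ≤ ∑ i, ∑ j, β i * w i j * x i j := by
    simpa only [mul_comm (s _), mul_sum, mul_assoc] using hval
  constructor
  · intro i j
    have hrow := (sum_eq_sum_iff_of_le fun i (_ : i ∈ univ) =>
      sum_le_sum fun j (_ : j ∈ univ) => hwx i j).1 (by linarith) i (mem_univ i)
    exact (sum_eq_sum_iff_of_le fun j (_ : j ∈ univ) => hwx i j).1 hrow j (mem_univ j)
  · refine fun j => (sum_eq_sum_iff_of_le fun j (_ : j ∈ univ) => hxs' j).1 ?_ j (mem_univ j)
    rw [← hle₂.antisymm (by linarith), sum_comm]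
    simp only [mul_sum]

theorem mul_sum_mul_le_of_mul_le {κ : Type*} [Fintype κ] {β : ℝ} {w p y : κ → ℝ}
    (hwp : ∀ j, β * w j ≤ p j) (hy : ∀ j, 0 ≤ y j) :
    β * ∑ j, w j * y j ≤ ∑ j, p j * y j := by
  rw [mul_sum]
  exact sum_le_sum fun j _ => by
    rw [← mul_assoc]; exact mul_le_mul_of_nonneg_right (hwp j) (hy j)

section FisherMarket

variable {ι : Type*} [Fintype ι] {m : ℕ} {s : Fin m → ℝ} {v : ι → Fin m → ℝ} {B : ι → ℝ}
  {x y : ι → Fin m → ℝ}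

theorem elog_of_pos {t : ℝ} (ht : 0 < t) : elog t = Real.log t := if_neg ht.not_ge

theorem EGobj_of_utility_pos (hx : ∀ i, 0 < ∑ j, v i j * x i j) :
    EGobj v B x = ((∑ i, B i * Real.log (∑ j, v i j * x i j) : ℝ) : EReal) := by
  rw [EGobj, EReal.coe_finsetSum]
  exact sum_congr rfl fun i _ => by rw [elog_of_pos (hx i), EReal.coe_mul]

theorem EGobj_eq_bot_of_utility_nonpos (hB : ∀ i, 0 < B i) {i : ι}
    (hi : ∑ j, v i j * x i j ≤ 0) : EGobj v B x = ⊥ := by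
  classical
  rw [EGobj, ← add_sum_erase _ _ (mem_univ i), elog, if_pos hi,
    EReal.mul_bot_of_pos (EReal.coe_pos.mpr (hB i)), EReal.bot_add]

theorem convex_setOf_feasible : Convex ℝ {x : ι → Fin m → ℝ | Feasible s x} := by
  rintro x ⟨hx0, hxs⟩ y ⟨hy0, hys⟩ a b ha hb hab
  refine ⟨fun i j => ?_, fun j => ?_⟩
  · have := hx0 i j
    have := hy0 i j
    simp only [Pi.add_apply, Pi.smul_apply, smul_eq_mul]
    positivity
  · simp only [Pi.add_apply, Pi.smul_apply, smul_eq_mul, sum_add_distrib, ← mul_sum]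
    calc a * ∑ i, x i j + b * ∑ i, y i j ≤ a * s j + b * s j := by
          gcongr
          exacts [hxs j, hys j]
      _ = s j := by rw [← add_mul, hab, one_mul]

theorem feasible_const_div_card [Nonempty ι] (hs : ∀ j, 0 ≤ s j) :
    Feasible s (fun (_ : ι) j => s j / Fintype.card ι) := by
  have hcard : (Fintype.card ι : ℝ) ≠ 0 := Nat.cast_ne_zero.mpr Fintype.card_ne_zero
  refine ⟨fun _ j => div_nonneg (hs j) (Nat.cast_nonneg _), fun j => ?_⟩
  rw [sum_const, card_univ, nsmul_eq_mul, mul_div_cancel₀ _ hcard]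

theorem EGMax.utility_pos (hm : 0 < m) (hv : ∀ i j, 0 < v i j) (hB : ∀ i, 0 < B i)
    (hs : ∀ j, 0 < s j) (hx : EGMax s v B x) (i : ι) : 0 < ∑ j, v i j * x i j := by
  have : Nonempty ι := ⟨i⟩
  have hsplit : ∀ i, 0 < ∑ j, v i j * (s j / Fintype.card ι) := fun i =>
    sum_pos (fun j _ => mul_pos (hv i j) (div_pos (hs j) (Nat.cast_pos.mpr Fintype.card_pos)))
      ⟨⟨0, hm⟩, mem_univ _⟩
  have hle := hx.2 _ (feasible_const_div_card fun j => (hs j).le)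
  rw [EGobj_of_utility_pos hsplit] at hle
  by_contra! hi
  rw [EGobj_eq_bot_of_utility_nonpos hB hi, le_bot_iff] at hle
  exact EReal.coe_ne_bot _ hle

theorem EGMax.sum_div_utility_mul_utility_le (hv : ∀ i j, 0 ≤ v i j) (hB : ∀ i, 0 ≤ B i)
    (hx : EGMax s v B x) (hu : ∀ i, 0 < ∑ j, v i j * x i j) (hy : Feasible s y) :
    ∑ i, B i / (∑ j, v i j * x i j) * ∑ j, v i j * y i j ≤ ∑ i, B i := by
  refine sum_div_mul_le_of_forall_log_le hB hu
    (fun i => sum_nonneg fun j _ => mul_nonneg (hv i j) (hy.1 i j)) fun t ht => ?_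
  have hlin : ∀ i, ∑ j, v i j * ((1 - t) • x + t • y) i j
      = (1 - t) * ∑ j, v i j * x i j + t * ∑ j, v i j * y i j := fun i => by
    simp only [Pi.add_apply, Pi.smul_apply, smul_eq_mul, mul_sum]
    rw [← sum_add_distrib]
    exact sum_congr rfl fun j _ => by ring
  have hzpos : ∀ i, 0 < ∑ j, v i j * ((1 - t) • x + t • y) i j := fun i => by
    rw [hlin]
    have := mul_pos (sub_pos.2 ht.2) (hu i)
    have := mul_nonneg ht.1.le (sum_nonneg fun j (_ : j ∈ univ) => mul_nonneg (hv i j) (hy.1 i j))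
    linarith
  have hle := hx.2 _ (convex_setOf_feasible hx.1 hy (sub_nonneg.2 ht.2.le) ht.1.le
    (sub_add_cancel 1 t))
  rw [EGobj_of_utility_pos hzpos, EGobj_of_utility_pos hu] at hle
  simpa only [hlin] using EReal.coe_le_coe_iff.mp hle

theorem EGMax.sum_supply_mul_le (hv : ∀ i j, 0 ≤ v i j) (hB : ∀ i, 0 ≤ B i)
    (hs : ∀ j, 0 ≤ s j) (hx : EGMax s v B x) (hu : ∀ i, 0 < ∑ j, v i j * x i j)
    {p : Fin m → ℝ}
    (hp : ∀ j, p j ∈ Set.range fun i => B i / (∑ j', v i j' * x i j') * v i j) :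
    ∑ j, s j * p j ≤ ∑ i, B i := by
  classical
  choose k hk using hp
  -- give each item to a buyer of maximal bang-per-buck
  set y : ι → Fin m → ℝ := fun i j => if k j = i then s j else 0
  have hy : Feasible s y :=
    ⟨fun i j => by simp only [y]; split_ifs <;> simp [hs j], fun j => by simp [y]⟩
  calc ∑ j, s j * p j
      = ∑ i, B i / (∑ j, v i j * x i j) * ∑ j, v i j * y i j := by
        simp only [y, mul_sum, mul_ite, mul_zero]
        rw [sum_comm]
        refine sum_congr rfl fun j _ => ?_
        rw [sum_ite_eq, if_pos (mem_univ _), ← hk j]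
        ring
    _ ≤ ∑ i, B i := hx.sum_div_utility_mul_utility_le hv hB hu hy

end FisherMarket

/-- **Properties of the CEEI/Eisenberg–Gale solution.**  In a linear Fisher market,
let `x` be a maximizer of the Eisenberg–Gale program and define the utility prices
`β i = B i / (v i · x i)` and item prices `p j = max_i β i * v i j`.  Then:
(a) `x i j > 0` implies `β i * v i j = p j` (equal bang-per-buck across all items
assigned to a buyer); (b) `p · x i = B i` for every buyer `i`, so that
`∑ j, s j * p j = ∑ i, B i`; (c) the market clears: `∑ i, x i j = s j` for every
item `j`; (d) every buyer demands their bundle: for every `y ∈ ℝ_{≥0}^m` with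
`p · y ≤ B i` one has `v i · y ≤ v i · x i`, i.e. the CEEI allocation is a market
equilibrium and has no regret. -/
theorem ceei_is_market_equilibrium {n m : ℕ} (hm : 0 < m)
    (v : Fin n → Fin m → ℝ) (B : Fin n → ℝ) (s : Fin m → ℝ)
    (hv : ∀ i j, 0 < v i j) (hB : ∀ i, 0 < B i) (hs : ∀ j, 0 < s j)
    (x : Fin n → Fin m → ℝ) (hx : EGMax s v B x)
    (p : Fin m → ℝ)
    (hp : ∀ j, IsGreatest
      (Set.range fun i => (B i / (∑ j', v i j' * x i j')) * v i j) (p j)) :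
    (∀ i j, 0 < x i j → (B i / (∑ j', v i j' * x i j')) * v i j = p j) ∧
    (∀ i, ∑ j, p j * x i j = B i) ∧
    (∑ j, s j * p j = ∑ i, B i) ∧
    (∀ j, ∑ i, x i j = s j) ∧
    (∀ i, ∀ y : Fin m → ℝ, (∀ j, 0 ≤ y j) → (∑ j, p j * y j) ≤ B i →
      (∑ j, v i j * y j) ≤ ∑ j, v i j * x i j) := by
  have hu := hx.utility_pos hm hv hB hs
  have hdual := hx.sum_supply_mul_le (fun i j => (hv i j).le) (fun i => (hB i).le)
    (fun j => (hs j).le) hu fun j => (hp j).1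
  set u : Fin n → ℝ := fun i => ∑ j', v i j' * x i j'
  have hβp : ∀ i j, B i / u i * v i j ≤ p j := fun i j => (hp j).2 ⟨i, rfl⟩
  have hppos : ∀ j, 0 < p j := fun j => by
    obtain ⟨i, hi⟩ := (hp j).1
    exact hi ▸ mul_pos (div_pos (hB i) (hu i)) (hv i j)
  have hBu : ∀ i, B i / u i * u i = B i := fun i => div_mul_cancel₀ _ (hu i).ne'
  obtain ⟨hslack, hslack_supply⟩ := complementary_slackness hβp (fun j => (hppos j).le)
    hx.1.1 hx.1.2 (hdual.trans_eq (sum_congr rfl fun i _ => (hBu i).symm))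
  have hbudget : ∀ i, ∑ j, p j * x i j = B i := fun i => by
    rw [← hBu i, mul_sum]
    exact sum_congr rfl fun j _ => by rw [← hslack, mul_assoc]
  have hclear : ∀ j, ∑ i, x i j = s j := fun j =>
    mul_left_cancel₀ (hppos j).ne' (hslack_supply j)
  refine ⟨fun i j hij => mul_right_cancel₀ hij.ne' (hslack i j), hbudget, ?_, hclear,
    fun i y hy hpy => ?_⟩
  · calc ∑ j, s j * p j = ∑ j, ∑ i, p j * x i j := 
          sum_congr rfl fun j _ => by rw [← hclear j, mul_comm, mul_sum]
      _ = ∑ i, B i := by rw [sum_comm]; exact sum_congr rfl fun i _ => hbudget i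
  · refine le_of_mul_le_mul_left ?_ (div_pos (hB i) (hu i))
    calc B i / u i * ∑ j, v i j * y j ≤ ∑ j, p j * y j := mul_sum_mul_le_of_mul_le (hβp i) hy
      _ ≤ B i := hpy
      _ = B i / u i * u i := (hBu i).symm
end

section
/- Suppose prices p ∈ ℝ_{>0}^m and a market-clearing allocation x are such that for each buyer i, p · x_i = B_i and x_i maximizes v_i · y over all y ∈ ℝ_{≥0}^m with p · y ≤ B_i. Then x is Pareto optimal: there is no feasible allocation x' with v_i · x'_i ≥ v_i · x_i for all buyers i and v_i · x'_i > v_i · x_i for at least one buyer i. In particular, CEEI and CEEqI allocations are Pareto optimal. -/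
/-- **Market equilibria are Pareto optimal.**  Suppose prices `p ∈ ℝ_{>0}^m` and a
market-clearing allocation `x` are such that for each buyer `i`, `p · x i = B i`
and `x i` maximizes `v i · y` over all `y ∈ ℝ_{≥0}^m` with `p · y ≤ B i`.  Then `x`
is Pareto optimal: there is no feasible allocation `x'` with
`v i · x' i ≥ v i · x i` for all buyers `i` and `v i · x' i > v i · x i` for at
least one buyer `i`.  In particular, CEEI and CEEqI allocations are Pareto
optimal. -/
theorem equilibrium_pareto_optimal {n m : ℕ}
    (v : Fin n → Fin m → ℝ) (B : Fin n → ℝ) (p : Fin m → ℝ) (s : Fin m → ℝ)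
    (x : Fin n → Fin m → ℝ)
    (hv : ∀ i j, 0 < v i j) (hB : ∀ i, 0 < B i) (hp : ∀ j, 0 < p j)
    (hs : ∀ j, 0 < s j)
    (hx : ∀ i j, 0 ≤ x i j)
    (hclear : ∀ j, (∑ i, x i j) = s j)
    (hbudget : ∀ i, (∑ j, p j * x i j) = B i)
    (hdemand : ∀ i, ∀ y : Fin m → ℝ, (∀ j, 0 ≤ y j) → (∑ j, p j * y j) ≤ B i →
      (∑ j, v i j * y j) ≤ ∑ j, v i j * x i j) :
    ¬ ∃ x' : Fin n → Fin m → ℝ,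
      (∀ i j, 0 ≤ x' i j) ∧ (∀ j, (∑ i, x' i j) ≤ s j) ∧
      (∀ i, (∑ j, v i j * x i j) ≤ ∑ j, v i j * x' i j) ∧
      (∃ i, (∑ j, v i j * x i j) < ∑ j, v i j * x' i j) := by
  rintro ⟨x', hx', hfeas, hweak, i₀, hstrict⟩
  -- m must be positive
  have hm : 0 < m := by
    by_contra h
    have : m = 0 := Nat.eq_zero_of_not_pos h
    subst this
    have := hbudget i₀
    simp at this
    linarith [hB i₀]
  set j₀ : Fin m := ⟨0, hm⟩
  -- each buyer with weakly better bundle spends at least B i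
  have hspend : ∀ i, B i ≤ ∑ j, p j * x' i j := by
    intro i
    by_contra h
    push_neg at h
    set ε : ℝ := (B i - ∑ j, p j * x' i j) / p j₀ with hε
    have hεpos : 0 < ε := div_pos (by linarith) (hp j₀)
    set y : Fin m → ℝ := fun j => x' i j + if j = j₀ then ε else 0 with hy
    have hynn : ∀ j, 0 ≤ y j := by
      intro j
      simp only [hy]
      have := hx' i j
      split <;> [linarith; linarith]
    have hyb : (∑ j, p j * y j) ≤ B i := by
      have : (∑ j, p j * y j) = (∑ j, p j * x' i j) + p j₀ * ε := by
        simp only [hy, mul_add]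
        rw [Finset.sum_add_distrib]
        congr 1
        rw [Finset.sum_eq_single j₀]
        · simp
        · intro b _ hb; simp [hb]
        · simp
      rw [this, hε, mul_div_assoc', mul_comm, mul_div_assoc, div_self (hp j₀).ne', mul_one]
      linarith
    have hd := hdemand i y hynn hyb
    have hvy : (∑ j, v i j * y j) = (∑ j, v i j * x' i j) + v i j₀ * ε := by
      simp only [hy, mul_add]
      rw [Finset.sum_add_distrib]
      congr 1
      rw [Finset.sum_eq_single j₀]
      · simp
      · intro b _ hb; simp [hb]
      · simp
    have := hweak i
    have hvpos : 0 < v i j₀ * ε := mul_pos (hv i j₀) hεpos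
    linarith [hvy ▸ hd]
  -- the strict buyer spends strictly more than B i₀
  have hspendstrict : B i₀ < ∑ j, p j * x' i₀ j := by
    by_contra h
    push_neg at h
    have := hdemand i₀ (x' i₀) (hx' i₀) h
    linarith
  -- sum over all buyers
  have hsum : (∑ i, B i) < ∑ i, ∑ j, p j * x' i j := by
    apply Finset.sum_lt_sum
    · intro i _; exact hspend i
    · exact ⟨i₀, Finset.mem_univ i₀, hspendstrict⟩
  have h1 : (∑ i, ∑ j, p j * x' i j) ≤ ∑ j, p j * s j := by
    rw [Finset.sum_comm]
    apply Finset.sum_le_sum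
    intro j _
    rw [← Finset.mul_sum]
    exact mul_le_mul_of_nonneg_left (hfeas j) (hp j).le
  have h2 : (∑ i, B i) = ∑ j, p j * s j := by
    calc (∑ i, B i) = ∑ i, ∑ j, p j * x i j := by
          exact Finset.sum_congr rfl fun i _ => (hbudget i).symm
      _ = ∑ j, p j * s j := by
          rw [Finset.sum_comm]
          exact Finset.sum_congr rfl fun j _ => by rw [← Finset.mul_sum, hclear j]
  linarith
end

section
/- Suppose prices p ∈ ℝ_{>0}^m, all budgets equal a common value B > 0, the allocation x is market-clearing with ∑_j s_j p_j = n B, and each x_i maximizes v_i · y over all y ∈ ℝ_{≥0}^m with p · y ≤ B. Then every buyer receives at least their proportional share: v_i · x_i ≥ (1/n) ∑_j s_j v_{ij} for every i. -/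
/-- **Equilibria from equal incomes guarantee the proportional share.**  Suppose
prices `p ∈ ℝ_{>0}^m`, all budgets equal a common value `B > 0`, the allocation `x`
is market-clearing with `∑ j, s j * p j = n * B`, and each `x i` maximizes
`v i · y` over all `y ∈ ℝ_{≥0}^m` with `p · y ≤ B`.  Then every buyer receives at
least their proportional share: `v i · x i ≥ (1 / n) * ∑ j, s j * v i j` for every
buyer `i`. -/
theorem equilibrium_proportional_share {n m : ℕ}
    (v : Fin n → Fin m → ℝ) (B : ℝ) (p : Fin m → ℝ) (s : Fin m → ℝ)
    (x : Fin n → Fin m → ℝ)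
    (hv : ∀ i j, 0 < v i j) (hB : 0 < B) (hp : ∀ j, 0 < p j) (hs : ∀ j, 0 < s j)
    (hx : ∀ i j, 0 ≤ x i j)
    (hclear : ∀ j, (∑ i, x i j) = s j)
    (hprice : (∑ j, s j * p j) = n * B)
    (hdemand : ∀ i, ∀ y : Fin m → ℝ, (∀ j, 0 ≤ y j) → (∑ j, p j * y j) ≤ B →
      (∑ j, v i j * y j) ≤ ∑ j, v i j * x i j) :
    ∀ i, (∑ j, v i j * x i j) ≥ (1 / (n : ℝ)) * ∑ j, s j * v i j := by
  intro i
  have hn : 0 < (n : ℝ) := by exact_mod_cast i.pos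
  have h1 : (∑ j, p j * (s j / n)) ≤ B := by
    have : (∑ j, p j * (s j / n)) = (∑ j, s j * p j) / n := by
      rw [Finset.sum_div]; congr 1; ext j; ring
    rw [this, hprice]
    rw [mul_comm, mul_div_assoc, div_self hn.ne', mul_one]
  have h2 := hdemand i (fun j => s j / n) (fun j => div_nonneg (hs j).le hn.le) h1
  calc (∑ j, v i j * x i j) ≥ ∑ j, v i j * (s j / n) := h2
    _ = (1 / (n : ℝ)) * ∑ j, s j * v i j := by
        rw [Finset.mul_sum]; congr 1; ext j; ring
end

section
/- Consider a linear Fisher market with n buyers in which the supply of each item j satisfies s_j ≤ c_j n for constants c_j > 0, and let (x, p) be a CEEI solution with utility prices β_i = B_i / (v_i · x_i) and prices p_j = max_i β_i v_{ij}. Let I' be a nonempty subset of buyers and j an item, and let v'_j > 0 and v''_{j'} (for each item j') satisfy v'_j ≤ min_{i ∈ I'} v_{ij} and v''_{j'} ≥ max_{i ∈ I'} v_{ij'}. Then p_j ≥ (|I'| · min_i B_i) / (n ∑_{j'} c_{j'} v''_{j'}) · v'_j. -/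
-- auxiliary: utilities are positive at an EG maximum
lemma util_pos {n m : ℕ} (v : Fin n → Fin m → ℝ) (B : Fin n → ℝ) (s : Fin m → ℝ)
    (hv : ∀ i j, 0 < v i j) (hB : ∀ i, 0 < B i) (hs : ∀ j, 0 < s j)
    (hm : 0 < m) (hn : 0 < n)
    (x : Fin n → Fin m → ℝ) (hx : EGMax s v B x) :
    ∀ i, 0 < ∑ j, v i j * x i j := by
  by_contra h
  push_neg at h
  obtain ⟨i0, hi0⟩ := h
  -- objective at x is ⊥
  have hobjx : EGobj v B x = ⊥ := by
    unfold EGobj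
    rw [← Finset.add_sum_erase _ _ (Finset.mem_univ i0)]
    have : elog (∑ j, v i0 j * x i0 j) = ⊥ := by
      unfold elog; rw [if_pos hi0]
    rw [this, EReal.coe_mul_bot_of_pos (hB i0), EReal.bot_add]
  -- a feasible allocation with positive utilities
  set y : Fin n → Fin m → ℝ := fun _ j => s j / n with hy
  have hyfeas : Feasible s y := by
    constructor
    · intro i j
      exact div_nonneg (hs j).le (Nat.cast_nonneg n)
    · intro j
      simp only [hy, Finset.sum_const, Finset.card_univ, Fintype.card_fin, nsmul_eq_mul]
      rw [mul_div_cancel₀]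
      positivity
  have hupos : ∀ i : Fin n, 0 < ∑ j, v i j * y i j := by
    intro i
    apply Finset.sum_pos
    · intro j _
      exact mul_pos (hv i j) (div_pos (hs j) (by exact_mod_cast hn))
    · exact ⟨⟨0, hm⟩, Finset.mem_univ _⟩
  have hobjy : EGobj v B y = ((∑ i, B i * Real.log (∑ j, v i j * y i j) : ℝ) : EReal) := by
    unfold EGobj
    have hms : ((∑ i, B i * Real.log (∑ j, v i j * y i j) : ℝ) : EReal)
        = ∑ i, ((B i * Real.log (∑ j, v i j * y i j) : ℝ) : EReal) :=
      map_sum (⟨⟨(fun r : ℝ => (r : EReal)), EReal.coe_zero⟩, EReal.coe_add⟩ : ℝ →+ EReal) _ _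
    rw [hms]
    apply Finset.sum_congr rfl
    intro i _
    unfold elog
    rw [if_neg (not_le.mpr (hupos i)), EReal.coe_mul]
  have := hx.2 y hyfeas
  rw [hobjx, hobjy] at this
  exact (EReal.coe_ne_bot _) (le_bot_iff.mp this)


/-- **Lower bound on CEEI prices.**  Consider a linear Fisher market with `n`
buyers in which the supply of each item `j` satisfies `s j ≤ c j * n` for constants
`c j > 0`, and let `(x, p)` be a CEEI solution with utility prices
`β i = B i / (v i · x i)` and prices `p j = max_i β i * v i j`.  Let `I'` be a
nonempty subset of buyers and `j` an item, and let `v' > 0` and `v'' j'` (for each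
item `j'`) satisfy `v' ≤ min_{i ∈ I'} v i j` and `v'' j' ≥ max_{i ∈ I'} v i j'`.
Then `p j ≥ (|I'| * min_i B i) / (n * ∑ j', c j' * v'' j') * v'`. -/
theorem ceei_price_lower_bound {n m : ℕ}
    (v : Fin n → Fin m → ℝ) (B : Fin n → ℝ) (s c : Fin m → ℝ)
    (hv : ∀ i j, 0 < v i j) (hB : ∀ i, 0 < B i) (hs : ∀ j, 0 < s j)
    (hc : ∀ j, 0 < c j) (hsc : ∀ j, s j ≤ c j * n)
    (x : Fin n → Fin m → ℝ) (hx : EGMax s v B x)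
    (p : Fin m → ℝ)
    (hp : ∀ j, IsGreatest
      (Set.range fun i => (B i / (∑ j', v i j' * x i j')) * v i j) (p j))
    (I' : Finset (Fin n)) (hI' : I'.Nonempty) (j : Fin m)
    (v' : ℝ) (hv'pos : 0 < v') (hv'le : ∀ i ∈ I', v' ≤ v i j)
    (v'' : Fin m → ℝ) (hv''ge : ∀ j', ∀ i ∈ I', v i j' ≤ v'' j') :
    ((I'.card : ℝ) * (⨅ i, B i)) / ((n : ℝ) * ∑ j', c j' * v'' j') * v' ≤ p j := by
  obtain ⟨ia, hia⟩ := hI'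
  have hn : 0 < n := Fin.pos ia
  have hm : 0 < m := Fin.pos j
  have hu := util_pos v B s hv hB hs hm hn x hx
  -- S > 0
  set S : ℝ := ∑ j', c j' * v'' j' with hS
  have hSpos : 0 < S := by
    apply Finset.sum_pos
    · intro j' _
      exact mul_pos (hc j') (lt_of_lt_of_le (hv ia j') (hv''ge j' ia hia))
    · exact ⟨j, Finset.mem_univ _⟩
  -- pick i0 ∈ I' with minimal utility
  obtain ⟨i0, hi0I, hi0min⟩ := I'.exists_min_image (fun i => ∑ j', v i j' * x i j') ⟨ia, hia⟩
  set u : Fin n → ℝ := fun i => ∑ j', v i j' * x i j' with hud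
  -- |I'| * u i0 ≤ n * S
  have hcard : 0 < (I'.card : ℝ) := by exact_mod_cast Finset.card_pos.mpr ⟨ia, hia⟩
  have hkey : (I'.card : ℝ) * u i0 ≤ n * S := by
    have h1 : (I'.card : ℝ) * u i0 ≤ ∑ i ∈ I', u i := by
      have := Finset.card_nsmul_le_sum I' u (u i0) (fun i hi => hi0min i hi)
      simpa [nsmul_eq_mul] using this
    have h2 : ∑ i ∈ I', u i ≤ ∑ j', v'' j' * s j' := by
      have hcomm : ∑ i ∈ I', u i = ∑ j' : Fin m, ∑ i ∈ I', v i j' * x i j' := Finset.sum_comm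
      rw [hcomm]
      · apply Finset.sum_le_sum
        intro j' _
        have hx0 := hx.1.1
        calc ∑ i ∈ I', v i j' * x i j' ≤ ∑ i ∈ I', v'' j' * x i j' := by
              apply Finset.sum_le_sum
              intro i hi
              exact mul_le_mul_of_nonneg_right (hv''ge j' i hi) (hx0 i j')
          _ = v'' j' * ∑ i ∈ I', x i j' := by rw [Finset.mul_sum]
          _ ≤ v'' j' * ∑ i, x i j' := by
              apply mul_le_mul_of_nonneg_left _ (le_trans (hv ia j').le (hv''ge j' ia hia))
              exact Finset.sum_le_sum_of_subset_of_nonneg (Finset.subset_univ I')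
                (fun i _ _ => hx0 i j')
          _ ≤ v'' j' * s j' := by
              apply mul_le_mul_of_nonneg_left (hx.1.2 j')
              exact le_trans (hv ia j').le (hv''ge j' ia hia)
    have h3 : ∑ j', v'' j' * s j' ≤ n * S := by
      rw [hS, Finset.mul_sum]
      apply Finset.sum_le_sum
      intro j' _
      have : v'' j' * s j' ≤ v'' j' * (c j' * n) :=
        mul_le_mul_of_nonneg_left (hsc j') (le_trans (hv ia j').le (hv''ge j' ia hia))
      linarith [this]
    linarith
  have hu0 : 0 < u i0 := hu i0
  -- β i0 bound
  have hβ : (I'.card : ℝ) * B i0 / (n * S) ≤ B i0 / u i0 := by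
    rw [div_le_div_iff₀ (by positivity) hu0]
    nlinarith [mul_le_mul_of_nonneg_left hkey (hB i0).le]
  have hinf : (⨅ i, B i) ≤ B i0 := ciInf_le (Finite.bddBelow_range B) i0
  have hfinal : ((I'.card : ℝ) * (⨅ i, B i)) / (n * S) * v' ≤ B i0 / u i0 * v i0 j := by
    calc ((I'.card : ℝ) * (⨅ i, B i)) / (n * S) * v'
        ≤ ((I'.card : ℝ) * B i0) / (n * S) * v' := by
          apply mul_le_mul_of_nonneg_right _ hv'pos.le
          apply div_le_div_of_nonneg_right _ (by positivity)
          exact mul_le_mul_of_nonneg_left hinf hcard.le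
      _ ≤ B i0 / u i0 * v' := mul_le_mul_of_nonneg_right hβ hv'pos.le
      _ ≤ B i0 / u i0 * v i0 j :=
          mul_le_mul_of_nonneg_left (hv'le i0 hi0I) (div_pos (hB i0) hu0).le
  exact hfinal.trans ((hp j).2 ⟨i0, rfl⟩)
end
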